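/- arXiv:0809.4142 — 4 statements merged into one kernel-verified Lean document; each statement's English description precedes it below -/
import Mathlib

section
/- Let A ∈ SL(2,ℤ) with A ≠ I and A ≠ −I. Then the set of points v ∈ ℚ ∪ {∞} such that A·v = v or A·v is Farey-adjacent to v is contained in the union of at most two A-equivalence classes (i.e. at most two orbits of the cyclic group generated by A). -/
/-!
Represent a point of `ℚ ∪ {∞}` by a primitive vector `v = (p, q) ∈ ℤ²`, unique up to sign, and
put `Q(v) = det (v, A v)`. Then `A · v = v` iff `Q(v) = 0`, and `A · v` is Farey-adjacent to `v`
iff `Q(v) = ±1`.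

* Points with `Q = 0` are fixed by `A`; since `A ≠ ±1` there is at most one of them.
* If `Q(v) = Q(w) = ±1`, then `(v, A v)` is a basis of `ℤ²`, so `w = x v + y A v` and
  `Q(w) = N(x, y) Q(v)` with `N(x, y) = det (x + y A) = x² + t x y + y²`, `t = tr A`. Hence
  `x + y A` is a unit of norm `1` in `ℤ[A]`; multiplying by `A^{±1}` strictly decreases `|x| + |y|`
  until `x = 0` or `y = 0`, so `x + y A = ± Aⁿ` and `w = ± Aⁿ v`.
* If `Q` vanishes somewhere, `A` has eigenvalue `±1`, so `t² = 4`; then `Q` is a binary quadratic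
  form of discriminant `t² - 4 = 0`, hence semidefinite, and cannot take both values `1` and `-1`.
-/

open OnePoint Matrix

/-- `SL(2,ℤ)`. -/
abbrev SL2Z := Matrix.SpecialLinearGroup (Fin 2) ℤ

/-- The Möbius action of `SL(2,ℤ)` on the rational projective line `ℚ ∪ {∞}`:
the matrix `[[a,b],[c,d]]` sends `x` to `(ax+b)/(cx+d)` (and `∞ = 1/0`). -/
def mob (A : SL2Z) : OnePoint ℚ → OnePoint ℚ
  | OnePoint.infty =>
      if (A.1 1 0 : ℚ) = 0 then OnePoint.infty
      else OnePoint.some ((A.1 0 0 : ℚ) / (A.1 1 0 : ℚ))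
  | OnePoint.some x =>
      if (A.1 1 0 : ℚ) * x + (A.1 1 1 : ℚ) = 0 then OnePoint.infty
      else OnePoint.some (((A.1 0 0 : ℚ) * x + (A.1 0 1 : ℚ)) /
        ((A.1 1 0 : ℚ) * x + (A.1 1 1 : ℚ)))

/-- Farey adjacency on `ℚ ∪ {∞}`: the reduced fractions `p/q` and `r/s`
are adjacent iff `|ps - qr| = 1`, where `∞ = 1/0`.  (Rationals in Lean are
stored in lowest terms with positive denominator.) -/
def fareyAdj : OnePoint ℚ → OnePoint ℚ → Prop
  | OnePoint.infty, OnePoint.infty => False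
  | OnePoint.infty, OnePoint.some x => x.den = 1
  | OnePoint.some x, OnePoint.infty => x.den = 1
  | OnePoint.some x, OnePoint.some y => |x.num * (y.den : ℤ) - (x.den : ℤ) * y.num| = 1

def projPoint (p q : ℤ) : OnePoint ℚ :=
  if q = 0 then ∞ else ((p / q : ℚ) : OnePoint ℚ)

def primRep : OnePoint ℚ → ℤ × ℤ
  | ∞ => (1, 0)
  | (x : ℚ) => (x.num, x.den)

lemma isCoprime_primRep (v : OnePoint ℚ) : IsCoprime (primRep v).1 (primRep v).2 := by
  cases v with
  | infty => exact isCoprime_one_left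
  | coe x => exact Int.isCoprime_iff_gcd_eq_one.mpr x.reduced

lemma projPoint_primRep (v : OnePoint ℚ) : projPoint (primRep v).1 (primRep v).2 = v := by
  cases v with
  | infty => simp [primRep, projPoint]
  | coe x => simp [primRep, projPoint, Rat.num_div_den]

lemma fareyAdj_iff (v w : OnePoint ℚ) :
    fareyAdj v w ↔ |(primRep v).1 * (primRep w).2 - (primRep v).2 * (primRep w).1| = 1 := by
  cases v <;> cases w <;> simp [fareyAdj, primRep]

lemma projPoint_units_mul (σ : ℤˣ) (p q : ℤ) :
    projPoint (σ * p) (σ * q) = projPoint p q := by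
  rcases Int.units_eq_one_or σ with rfl | rfl
  · simp
  · simp only [projPoint, Units.val_neg, Units.val_one, neg_one_mul, neg_eq_zero,
      Int.cast_neg, neg_div_neg_eq]

lemma cross_eq_zero_of_projPoint_eq {p q r s : ℤ} (h : projPoint p q = projPoint r s) :
    p * s - q * r = 0 := by
  unfold projPoint at h
  split_ifs at h with hq hs hs
  · simp [hq, hs]
  · cases h
  · cases h
  · have hqQ : (q : ℚ) ≠ 0 := by exact_mod_cast hq
    have hsQ : (s : ℚ) ≠ 0 := by exact_mod_cast hs
    rw [OnePoint.coe_eq_coe, div_eq_div_iff hqQ hsQ] at h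
    have : p * s = r * q := by exact_mod_cast h
    linear_combination this

lemma exists_eq_mul_of_cross_eq_zero {p q r s : ℤ} (hpq : IsCoprime p q)
    (hd : p * s - q * r = 0) : ∃ m, r = m * p ∧ s = m * q := by
  obtain ⟨u, v, huv⟩ := hpq
  exact ⟨u * r + v * s, by linear_combination (-r) * huv - v * hd,
    by linear_combination (-s) * huv + u * hd⟩

lemma exists_units_of_cross_eq_zero {p q r s : ℤ} (hpq : IsCoprime p q) (hrs : IsCoprime r s)
    (hd : p * s - q * r = 0) : ∃ σ : ℤˣ, r = σ * p ∧ s = σ * q := by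
  obtain ⟨m, rfl, rfl⟩ := exists_eq_mul_of_cross_eq_zero hpq hd
  obtain ⟨σ, hσ⟩ := hrs.isUnit_of_dvd' (dvd_mul_right m p) (dvd_mul_right m q)
  exact ⟨σ, by rw [hσ], by rw [hσ]⟩

lemma abs_cross_eq_one_of_fareyAdj {p q r s : ℤ} (hpq : IsCoprime p q) (hrs : IsCoprime r s)
    (h : fareyAdj (projPoint p q) (projPoint r s)) : |p * s - q * r| = 1 := by
  obtain ⟨σ, hσ₁, hσ₂⟩ := exists_units_of_cross_eq_zero hpq (isCoprime_primRep _)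
    (cross_eq_zero_of_projPoint_eq (projPoint_primRep (projPoint p q)).symm)
  obtain ⟨τ, hτ₁, hτ₂⟩ := exists_units_of_cross_eq_zero hrs (isCoprime_primRep _)
    (cross_eq_zero_of_projPoint_eq (projPoint_primRep (projPoint r s)).symm)
  rw [fareyAdj_iff, hσ₁, hσ₂, hτ₁, hτ₂] at h
  rwa [show σ * p * (τ * s) - σ * q * (τ * r) = σ * τ * (p * s - q * r) by ring, abs_mul,
    Int.isUnit_iff_abs_eq.mp (σ.isUnit.mul τ.isUnit), one_mul] at h

lemma mob_projPoint (B : SL2Z) {p q : ℤ} (h : p ≠ 0 ∨ q ≠ 0) :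
    mob B (projPoint p q) =
      projPoint (B.1 0 0 * p + B.1 0 1 * q) (B.1 1 0 * p + B.1 1 1 * q) := by
  by_cases hq : q = 0
  · subst hq
    have hp : p ≠ 0 := by simpa using h
    simp only [projPoint, mob, if_true, mul_zero, add_zero, mul_eq_zero, hp, or_false,
      Int.cast_eq_zero]
    split_ifs
    · rfl
    · push_cast
      rw [mul_div_mul_right _ _ (by exact_mod_cast hp)]
  · have hqQ : (q : ℚ) ≠ 0 := by exact_mod_cast hq
    have key : (B.1 1 0 : ℚ) * (p / q) + B.1 1 1 = ((B.1 1 0 * p + B.1 1 1 * q : ℤ) : ℚ) / q := by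
      push_cast; field_simp
    simp only [projPoint, mob, hq, if_false, key, div_eq_zero_iff, hqQ, or_false,
      Int.cast_eq_zero]
    split_ifs with hden
    · rfl
    · have hdenQ : ((B.1 1 0 * p + B.1 1 1 * q : ℤ) : ℚ) ≠ 0 := by exact_mod_cast hden
      congr 1
      field_simp
      push_cast
      ring

lemma mob_one (v : OnePoint ℚ) : mob 1 v = v := by
  cases v <;> simp [mob]

lemma SL2Z.det_eq_one (A : SL2Z) : A.1 0 0 * A.1 1 1 - A.1 0 1 * A.1 1 0 = 1 := by
  rw [← Matrix.det_fin_two]; exact A.2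

lemma SL2Z.isCoprime_mulVec (A : SL2Z) {p q : ℤ} (hpq : IsCoprime p q) :
    IsCoprime (A.1 0 0 * p + A.1 0 1 * q) (A.1 1 0 * p + A.1 1 1 * q) := by
  obtain ⟨u, v, huv⟩ := hpq
  exact ⟨u * A.1 1 1 - v * A.1 1 0, v * A.1 0 0 - u * A.1 0 1,
    by linear_combination huv + (u * p + v * q) * A.det_eq_one⟩

lemma SL2Z.sq_eq (A : SL2Z) : A.1 ^ 2 = A.1.trace • A.1 - 1 := by
  have h := Matrix.aeval_self_charpoly A.1
  rw [Matrix.charpoly_fin_two, A.2] at h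
  simp only [map_add, map_sub, map_pow, Polynomial.aeval_X, map_mul, Polynomial.aeval_C, map_one,
    ← Algebra.smul_def] at h
  linear_combination (norm := module) h

lemma SL2Z.mul_smul_one_add_smul (A : SL2Z) (x y : ℤ) :
    A.1 * (x • 1 + y • A.1) = (-y) • 1 + (x + A.1.trace * y) • A.1 := by
  rw [mul_add, mul_smul_comm, mul_one, mul_smul_comm, ← sq, A.sq_eq]
  module

lemma Matrix.eq_smul_one_of_mulVec_eq {M : Matrix (Fin 2) (Fin 2) ℤ} {k p q r s : ℤ}
    (hd : p * s - q * r ≠ 0)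
    (hP : M 0 0 * p + M 0 1 * q = k * p) (hQ : M 1 0 * p + M 1 1 * q = k * q)
    (hR : M 0 0 * r + M 0 1 * s = k * r) (hS : M 1 0 * r + M 1 1 * s = k * s) :
    M = k • 1 := by
  have entry : ∀ x : ℤ, x * (p * s - q * r) = 0 → x = 0 := fun x hx =>
    (mul_eq_zero.mp hx).resolve_right hd
  have h00 : M 0 0 - k = 0 := entry _ (by linear_combination s * hP - q * hR)
  have h01 : M 0 1 = 0 := entry _ (by linear_combination p * hR - r * hP)
  have h10 : M 1 0 = 0 := entry _ (by linear_combination s * hQ - q * hS)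
  have h11 : M 1 1 - k = 0 := entry _ (by linear_combination p * hS - r * hQ)
  ext i j
  fin_cases i <;> fin_cases j <;> simp [h01, h10, sub_eq_zero.mp h00, sub_eq_zero.mp h11]

section SignedPowers

def IsSignedZPow (A : SL2Z) (M : Matrix (Fin 2) (Fin 2) ℤ) : Prop :=
  ∃ n : ℤ, ∃ σ : ℤˣ, M = (σ : ℤ) • (A ^ n).1

variable {A : SL2Z}

lemma isSignedZPow_mul_left_iff {M : Matrix (Fin 2) (Fin 2) ℤ} :
    IsSignedZPow A (A.1 * M) ↔ IsSignedZPow A M := by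
  constructor
  · rintro ⟨n, σ, hM⟩
    refine ⟨-1 + n, σ, ?_⟩
    have hinv : (A⁻¹ : SL2Z).1 * A.1 = 1 := by
      rw [← Matrix.SpecialLinearGroup.coe_mul, inv_mul_cancel, Matrix.SpecialLinearGroup.coe_one]
    rw [_root_.zpow_add, _root_.zpow_neg_one, Matrix.SpecialLinearGroup.coe_mul, ← mul_smul_comm,
      ← hM, ← mul_assoc, hinv, one_mul]
  · rintro ⟨n, σ, rfl⟩
    exact ⟨1 + n, σ, by rw [_root_.zpow_one_add, Matrix.SpecialLinearGroup.coe_mul, mul_smul_comm]⟩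

lemma abs_add_mul_lt_of_sq_add_mul_add_sq_eq_one {t x y : ℤ} (h : x ^ 2 + t * x * y + y ^ 2 = 1)
    (hy : y ≠ 0) (hyx : |y| ≤ |x|) : |x + t * y| < |y| := by
  have hy1 : 1 ≤ |y| := Int.one_le_abs hy
  have hprod : |x| * |x + t * y| = |y| ^ 2 - 1 := by
    rw [← abs_mul, show x * (x + t * y) = -(y ^ 2 - 1) by linear_combination h, abs_neg, sq_abs,
      abs_of_nonneg (by nlinarith [sq_abs y])]
  nlinarith [abs_nonneg (x + t * y)]

lemma isSignedZPow_of_sq_add_mul_add_sq_eq_one (x y : ℤ)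
    (h : x ^ 2 + A.1.trace * x * y + y ^ 2 = 1) : IsSignedZPow A (x • 1 + y • A.1) := by
  by_cases hy : y = 0
  · subst hy
    obtain ⟨σ, rfl⟩ : IsUnit x := IsUnit.of_mul_eq_one x (by linear_combination h)
    exact ⟨0, σ, by simp⟩
  by_cases hx : x = 0
  · subst hx
    obtain ⟨σ, rfl⟩ : IsUnit y := IsUnit.of_mul_eq_one y (by linear_combination h)
    exact ⟨1, σ, by simp⟩
  rcases le_or_gt |y| |x| with hyx | hxy
  · have hlt := abs_add_mul_lt_of_sq_add_mul_add_sq_eq_one h hy hyx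
    rw [← isSignedZPow_mul_left_iff, A.mul_smul_one_add_smul]
    exact isSignedZPow_of_sq_add_mul_add_sq_eq_one (-y) (x + A.1.trace * y)
      (by linear_combination h)
  · have hlt := abs_add_mul_lt_of_sq_add_mul_add_sq_eq_one (t := A.1.trace) (x := y) (y := x)
      (by linear_combination h) hx hxy.le
    have hM : x • 1 + y • A.1 = A.1 * ((A.1.trace * x + y) • 1 + (-x) • A.1) := by
      rw [A.mul_smul_one_add_smul]; congr 2 <;> ring
    rw [hM, isSignedZPow_mul_left_iff]
    exact isSignedZPow_of_sq_add_mul_add_sq_eq_one (A.1.trace * x + y) (-x)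
      (by linear_combination h)
termination_by x.natAbs + y.natAbs
decreasing_by
  all_goals simp only [Int.abs_eq_natAbs] at *; omega

end SignedPowers

section ImageDet

/-- `det (v, A v)` for `v = (p, q)`. -/
def imageDet (A : SL2Z) (p q : ℤ) : ℤ :=
  p * (A.1 1 0 * p + A.1 1 1 * q) - q * (A.1 0 0 * p + A.1 0 1 * q)

variable {A : SL2Z}

lemma abs_imageDet_le_one_of_fixed_or_fareyAdj {p q : ℤ} (hpq : IsCoprime p q)
    (h : mob A (projPoint p q) = projPoint p q ∨
      fareyAdj (mob A (projPoint p q)) (projPoint p q)) :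
    |imageDet A p q| ≤ 1 := by
  rw [mob_projPoint A hpq.ne_zero_or_ne_zero] at h
  have hcross : imageDet A p q =
      -((A.1 0 0 * p + A.1 0 1 * q) * q - (A.1 1 0 * p + A.1 1 1 * q) * p) := by
    unfold imageDet; ring
  rw [hcross, abs_neg]
  rcases h with h | h
  · rw [cross_eq_zero_of_projPoint_eq h]; norm_num
  · exact (abs_cross_eq_one_of_fareyAdj (A.isCoprime_mulVec hpq) hpq h).le

lemma imageDet_smul_add_smul_mulVec (x y p q : ℤ) :
    imageDet A (x * p + y * (A.1 0 0 * p + A.1 0 1 * q))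
        (x * q + y * (A.1 1 0 * p + A.1 1 1 * q)) =
      (x ^ 2 + A.1.trace * x * y + y ^ 2) * imageDet A p q := by
  unfold imageDet
  rw [Matrix.trace_fin_two]
  linear_combination
    (y ^ 2 * (p * (A.1 1 0 * p + A.1 1 1 * q) - q * (A.1 0 0 * p + A.1 0 1 * q))) * A.det_eq_one

lemma exists_eigenvalue_of_imageDet_eq_zero {p q : ℤ} (hpq : IsCoprime p q)
    (h : imageDet A p q = 0) :
    ∃ k : ℤ, k * (A.1.trace - k) = 1 ∧
      A.1 0 0 * p + A.1 0 1 * q = k * p ∧ A.1 1 0 * p + A.1 1 1 * q = k * q := by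
  obtain ⟨k, hP, hQ⟩ := exists_eq_mul_of_cross_eq_zero hpq
    (r := A.1 0 0 * p + A.1 0 1 * q) (s := A.1 1 0 * p + A.1 1 1 * q) h
  refine ⟨k, ?_, hP, hQ⟩
  rw [Matrix.trace_fin_two]
  have hdet := A.det_eq_one
  have hp : k * (A.1 0 0 + A.1 1 1 - k) * p = p := by
    linear_combination (k - A.1 1 1) * hP + A.1 0 1 * hQ + p * hdet
  have hq : k * (A.1 0 0 + A.1 1 1 - k) * q = q := by
    linear_combination A.1 1 0 * hP + (k - A.1 0 0) * hQ + q * hdet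
  obtain ⟨u, v, huv⟩ := hpq
  linear_combination u * hp + v * hq + (1 - k * (A.1 0 0 + A.1 1 1 - k)) * huv

lemma projPoint_eq_of_imageDet_eq_zero (hA1 : A ≠ 1) (hA2 : A ≠ -1) {p q r s : ℤ}
    (hpq : IsCoprime p q) (hrs : IsCoprime r s)
    (h₁ : imageDet A p q = 0) (h₂ : imageDet A r s = 0) :
    projPoint p q = projPoint r s := by
  obtain ⟨k, hk, hP, hQ⟩ := exists_eigenvalue_of_imageDet_eq_zero hpq h₁
  obtain ⟨k', hk', hR, hS⟩ := exists_eigenvalue_of_imageDet_eq_zero hrs h₂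
  have hk₁ := Int.eq_one_or_neg_one_of_mul_eq_one hk
  have hkk : k' = k := by
    rcases hk₁ with rfl | rfl <;>
      rcases Int.eq_one_or_neg_one_of_mul_eq_one hk' with rfl | rfl <;> omega
  subst hkk
  by_cases hd : p * s - q * r = 0
  · obtain ⟨σ, rfl, rfl⟩ := exists_units_of_cross_eq_zero hpq hrs hd
    exact (projPoint_units_mul σ p q).symm
  · have hA := Matrix.eq_smul_one_of_mulVec_eq hd hP hQ hR hS
    rcases hk₁ with rfl | rfl
    · exact absurd (Subtype.ext (by simpa using hA)) hA1
    · exact absurd (Subtype.ext (by simpa using hA)) hA2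

lemma exists_mob_zpow_eq_of_abs_imageDet_eq_one {p q r s : ℤ}
    (h : imageDet A r s = imageDet A p q) (hε : |imageDet A p q| = 1) :
    ∃ n : ℤ, mob (A ^ n) (projPoint p q) = projPoint r s := by
  set ε := imageDet A p q with hε_def
  have hε' : p * (A.1 1 0 * p + A.1 1 1 * q) - q * (A.1 0 0 * p + A.1 0 1 * q) = ε := rfl
  have hεε : ε * ε = 1 := by rw [← abs_mul_abs_self, hε, one_mul]
  -- the coordinates of `(r, s)` in the basis `v = (p, q)`, `A v` of `ℤ²`, of determinant `ε`
  set x := ε * (r * (A.1 1 0 * p + A.1 1 1 * q) - s * (A.1 0 0 * p + A.1 0 1 * q))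
  set y := ε * (p * s - q * r)
  have hr : x * p + y * (A.1 0 0 * p + A.1 0 1 * q) = r := by
    linear_combination (ε * r) * hε' + r * hεε
  have hs : x * q + y * (A.1 1 0 * p + A.1 1 1 * q) = s := by
    linear_combination (ε * s) * hε' + s * hεε
  have hmul := imageDet_smul_add_smul_mulVec (A := A) x y p q
  rw [hr, hs, h] at hmul
  obtain ⟨n, σ, hM⟩ := isSignedZPow_of_sq_add_mul_add_sq_eq_one x y
    (by linear_combination (1 - (x ^ 2 + A.1.trace * x * y + y ^ 2)) * hεε - ε * hmul)
  have hAn : (A ^ n).1 = (σ : ℤ) • (x • 1 + y • A.1) := by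
    rw [hM, smul_smul, ← Units.val_mul, Int.units_mul_self, Units.val_one, one_smul]
  have hne : p ≠ 0 ∨ q ≠ 0 := by
    by_contra! h0
    simp [hε_def, imageDet, h0.1, h0.2] at hε
  refine ⟨n, ?_⟩
  rw [mob_projPoint _ hne, hAn, ← projPoint_units_mul σ r s, ← hr, ← hs]
  congr 1 <;>
    simp only [Matrix.smul_apply, Matrix.add_apply, Matrix.one_apply_eq, smul_eq_mul,
      Matrix.one_apply_ne (zero_ne_one : (0 : Fin 2) ≠ 1),
      Matrix.one_apply_ne (one_ne_zero : (1 : Fin 2) ≠ 0)] <;>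
    ring

lemma exists_mob_zpow_eq_of_imageDet_eq (hA1 : A ≠ 1) (hA2 : A ≠ -1)
    {p q r s : ℤ} (hpq : IsCoprime p q) (hrs : IsCoprime r s)
    (h : imageDet A r s = imageDet A p q) (hle : |imageDet A p q| ≤ 1) :
    ∃ n : ℤ, mob (A ^ n) (projPoint p q) = projPoint r s := by
  rcases eq_or_ne (imageDet A p q) 0 with h₀ | h₀
  · refine ⟨0, ?_⟩
    rw [zpow_zero, mob_one, projPoint_eq_of_imageDet_eq_zero hA1 hA2 hpq hrs h₀ (h.trans h₀)]
  · exact exists_mob_zpow_eq_of_abs_imageDet_eq_one h (le_antisymm hle (Int.one_le_abs h₀))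

lemma trace_sq_eq_four_of_imageDet_eq_zero {p q : ℤ} (hpq : IsCoprime p q)
    (h : imageDet A p q = 0) : A.1.trace ^ 2 = 4 := by
  obtain ⟨k, hk, -⟩ := exists_eigenvalue_of_imageDet_eq_zero hpq h
  rcases Int.eq_one_or_neg_one_of_mul_eq_one hk with rfl | rfl <;> nlinarith

/-- `imageDet A` is the binary quadratic form `c p² + (d - a) p q - b q²`, of discriminant
`tr² - 4`; when that vanishes the form is semidefinite. -/
lemma imageDet_mul_imageDet_nonneg (ht : A.1.trace ^ 2 = 4) (p q r s : ℤ) :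
    0 ≤ imageDet A p q * imageDet A r s := by
  have hdet := A.det_eq_one
  rw [Matrix.trace_fin_two] at ht
  unfold imageDet
  by_cases hc : A.1 1 0 = 0
  · have hda : A.1 1 1 = A.1 0 0 := by
      rw [hc, mul_zero, sub_zero] at hdet
      nlinarith
    rw [hc, hda]
    nlinarith [sq_nonneg (A.1 0 1 * q * s)]
  · have square : ∀ x y : ℤ,
        4 * A.1 1 0 * (x * (A.1 1 0 * x + A.1 1 1 * y) - y * (A.1 0 0 * x + A.1 0 1 * y)) =
          (2 * A.1 1 0 * x + (A.1 1 1 - A.1 0 0) * y) ^ 2 := fun x y => by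
      linear_combination 4 * y ^ 2 * hdet - y ^ 2 * ht
    refine nonneg_of_mul_nonneg_right (a := 16 * A.1 1 0 ^ 2) ?_ (by positivity)
    calc (0 : ℤ)
        ≤ ((2 * A.1 1 0 * p + (A.1 1 1 - A.1 0 0) * q) *
            (2 * A.1 1 0 * r + (A.1 1 1 - A.1 0 0) * s)) ^ 2 := sq_nonneg _
      _ = _ := by rw [mul_pow, ← square, ← square]; ring

lemma exists_two_imageDet_values (A : SL2Z) : ∃ e₁ e₂ : ℤ, ∀ p q : ℤ, IsCoprime p q →
    |imageDet A p q| ≤ 1 → imageDet A p q = e₁ ∨ imageDet A p q = e₂ := by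
  by_cases h₀ : ∃ p q : ℤ, IsCoprime p q ∧ imageDet A p q = 0
  · obtain ⟨p₀, q₀, hpq₀, hQ₀⟩ := h₀
    have hsemi := imageDet_mul_imageDet_nonneg (trace_sq_eq_four_of_imageDet_eq_zero hpq₀ hQ₀)
    by_cases h₁ : ∃ p q : ℤ, imageDet A p q = 1
    · obtain ⟨p₁, q₁, hQ₁⟩ := h₁
      refine ⟨0, 1, fun p q _ hle => ?_⟩
      have := hsemi p q p₁ q₁
      rw [hQ₁] at this
      have := abs_le.mp hle
      omega
    · refine ⟨0, -1, fun p q _ hle => ?_⟩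
      have : imageDet A p q ≠ 1 := fun h => h₁ ⟨p, q, h⟩
      have := abs_le.mp hle
      omega
  · refine ⟨1, -1, fun p q hpq hle => ?_⟩
    have : imageDet A p q ≠ 0 := fun h => h₀ ⟨p, q, hpq, h⟩
    have := abs_le.mp hle
    omega

lemma exists_orbit_representative (hA1 : A ≠ 1) (hA2 : A ≠ -1) (e : ℤ) :
    ∃ v₀ : OnePoint ℚ, ∀ p q : ℤ, IsCoprime p q → |imageDet A p q| ≤ 1 →
      imageDet A p q = e → ∃ n : ℤ, mob (A ^ n) v₀ = projPoint p q := by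
  by_cases he : ∃ p q : ℤ, IsCoprime p q ∧ |imageDet A p q| ≤ 1 ∧ imageDet A p q = e
  · obtain ⟨p₀, q₀, hpq₀, hle₀, rfl⟩ := he
    exact ⟨projPoint p₀ q₀, fun p q hpq _ h =>
      exists_mob_zpow_eq_of_imageDet_eq hA1 hA2 hpq₀ hpq h hle₀⟩
  · exact ⟨∞, fun p q hpq hle h => absurd ⟨p, q, hpq, hle, h⟩ he⟩

end ImageDet

theorem at_most_two_classes (A : SL2Z) (hA1 : A ≠ 1) (hA2 : A ≠ -1) :
    ∃ v₁ v₂ : OnePoint ℚ, ∀ v : OnePoint ℚ,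
      (mob A v = v ∨ fareyAdj (mob A v) v) →
      ((∃ n : ℤ, mob (A ^ n) v₁ = v) ∨ (∃ n : ℤ, mob (A ^ n) v₂ = v)) := by
  obtain ⟨e₁, e₂, he⟩ := exists_two_imageDet_values A
  obtain ⟨v₁, hv₁⟩ := exists_orbit_representative hA1 hA2 e₁
  obtain ⟨v₂, hv₂⟩ := exists_orbit_representative hA1 hA2 e₂
  refine ⟨v₁, v₂, fun v hv => ?_⟩
  obtain ⟨p, q, hpq, rfl⟩ : ∃ p q : ℤ, IsCoprime p q ∧ projPoint p q = v :=
    ⟨_, _, isCoprime_primRep v, projPoint_primRep v⟩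
  have hle := abs_imageDet_le_one_of_fixed_or_fareyAdj hpq hv
  exact (he _ _ hpq hle).imp (hv₁ _ _ hpq hle) (hv₂ _ _ hpq hle)
end

section
/- Let A ∈ SL(2,ℤ) with A ≠ I and A ≠ −I, and suppose A has finite order in PSL(2,ℤ), i.e. Aᵏ = I or Aᵏ = −I for some integer k ≥ 1. Then the set of points v ∈ ℚ ∪ {∞} such that A·v = v or A·v is Farey-adjacent to v is contained in a single A-equivalence class (a single orbit of the cyclic group generated by A). -/
open OnePoint Matrix

/-!
A point `v = p/q` of `ℚ ∪ {∞}` is represented by a primitive vector `z = (p, q)`, up to sign, and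
`v` is fixed by or Farey-adjacent to `A·v` exactly when `Q(z) = det(z, Az)` is `0` or `±1`.
A periodic `A ≠ ±1` is elliptic, i.e. `|tr A| ≤ 1`: otherwise the Chebyshev coefficients in
`Aⁿ⁺¹ = Sₙ(tr A) A - Sₙ₋₁(tr A)` grow strictly, and `Aᵏ = ±1` would force `A` to be scalar.
For elliptic `A` the form `Q` is definite, so `A` has no fixed points. If `Q(u) = ±1`, then
`(u, Au)` is a basis of `ℤ²`, and `Q(mu + nAu) = (m² + tr A·mn + n²) Q(u)`. For `|t| ≤ 1` the
form `m² + tmn + n²` is `±1` only at `(m, n) = (±1, 0), (0, ±1), ±(-1, t)`, the coordinates of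
`±u, ±Au, ±A²u` (as `A² = tA - 1`). Hence every point with `|Q| = 1` is `v₀`, `A·v₀` or `A²·v₀`.
-/

open Polynomial

section TwoByTwo

variable {R : Type*} [CommRing R]

def wedge (z w : Fin 2 → R) : R := z 0 * w 1 - z 1 * w 0

theorem wedge_self (z : Fin 2 → R) : wedge z z = 0 := by
  unfold wedge; ring

theorem wedge_comm (z w : Fin 2 → R) : wedge w z = -wedge z w := by
  unfold wedge; ring

theorem wedge_neg_left (z w : Fin 2 → R) : wedge (-z) w = -wedge z w := by
  simp only [wedge, Pi.neg_apply]; ring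

theorem wedge_neg_right (z w : Fin 2 → R) : wedge z (-w) = -wedge z w := by
  simp only [wedge, Pi.neg_apply]; ring

theorem exists_eq_smul_add_smul_of_isUnit_wedge {u w : Fin 2 → R} (h : IsUnit (wedge u w))
    (z : Fin 2 → R) : ∃ m n : R, z = m • u + n • w := by
  obtain ⟨e, he⟩ := h.exists_right_inv
  -- Cramer's rule
  refine ⟨e * wedge z w, e * wedge u z, ?_⟩
  unfold wedge at he ⊢
  ext i
  fin_cases i <;> simp <;> linear_combination (-z _) * he

theorem isCoprime_mulVec {B : Matrix (Fin 2) (Fin 2) R} (hB : B.det = 1) {z : Fin 2 → R}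
    (hz : IsCoprime (z 0) (z 1)) : IsCoprime ((B *ᵥ z) 0) ((B *ᵥ z) 1) := by
  obtain ⟨a, b, hab⟩ := hz
  rw [det_fin_two] at hB
  refine ⟨a * B 1 1 - b * B 1 0, b * B 0 0 - a * B 0 1, ?_⟩
  simp only [mulVec, dotProduct, Fin.sum_univ_two]
  linear_combination (a * z 0 + b * z 1) * hB + hab

theorem sq_eq_trace_smul_sub_one {M : Matrix (Fin 2) (Fin 2) R} (hM : M.det = 1) :
    M ^ 2 = M.trace • M - 1 := by
  nontriviality R
  have hCH := M.aeval_self_charpoly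
  rw [charpoly_fin_two, hM] at hCH
  simp only [map_sub, map_add, map_mul, aeval_X_pow, aeval_C, aeval_X, map_one,
    ← Algebra.smul_def] at hCH
  rw [← sub_eq_zero, ← hCH]
  abel

theorem pow_succ_eq_eval_S_smul_sub {M : Matrix (Fin 2) (Fin 2) R} (hM : M.det = 1) (n : ℕ) :
    M ^ (n + 1) =
      (Chebyshev.S R n).eval M.trace • M - (Chebyshev.S R (n - 1)).eval M.trace • 1 := by
  induction n with
  | zero => simp
  | succ n ih =>
    rw [pow_succ, ih, sub_mul, smul_mul_assoc, ← sq, sq_eq_trace_smul_sub_one hM,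
      smul_mul_assoc, one_mul]
    push_cast
    rw [add_sub_cancel_right, Chebyshev.S_add_one]
    simp only [eval_sub, eval_mul, eval_X, smul_sub, smul_smul, sub_smul, mul_comm]
    abel

theorem wedge_mulVec_smul_add_smul {M : Matrix (Fin 2) (Fin 2) R} (hM : M.det = 1)
    (u : Fin 2 → R) (m n : R) :
    wedge (m • u + n • M *ᵥ u) (M *ᵥ (m • u + n • M *ᵥ u)) =
      (m ^ 2 + M.trace * m * n + n ^ 2) * wedge u (M *ᵥ u) := by
  rw [det_fin_two] at hM
  simp only [wedge, mulVec, dotProduct, Fin.sum_univ_two, trace_fin_two, Pi.add_apply,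
    Pi.smul_apply, smul_eq_mul]
  linear_combination
    (n ^ 2 * (M 1 0 * u 0 ^ 2 + (M 1 1 - M 0 0) * u 0 * u 1 - M 0 1 * u 1 ^ 2)) * hM

theorem Matrix.IsElliptic.wedge_mulVec_ne_zero [LinearOrder R] [IsStrictOrderedRing R]
    {M : Matrix (Fin 2) (Fin 2) R} (hM : M.IsElliptic) {z : Fin 2 → R} (hz : z ≠ 0) :
    wedge z (M *ᵥ z) ≠ 0 := by
  have hdiscr : M.discr < 0 := hM
  rw [discr_fin_two, trace_fin_two, det_fin_two] at hdiscr
  intro h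
  -- completing the square: `4c · Q(z) = (2c z₀ + (d - a) z₁)² - discr · z₁²`
  have key : (2 * M 1 0 * z 0 + (M 1 1 - M 0 0) * z 1) ^ 2 =
      ((M 0 0 + M 1 1) ^ 2 - 4 * (M 0 0 * M 1 1 - M 0 1 * M 1 0)) * z 1 ^ 2 := by
    simp only [wedge, mulVec, dotProduct, Fin.sum_univ_two] at h
    linear_combination (4 * M 1 0) * h
  have h1 : z 1 = 0 := by
    have : ((M 0 0 + M 1 1) ^ 2 - 4 * (M 0 0 * M 1 1 - M 0 1 * M 1 0)) * z 1 ^ 2 = 0 :=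
      le_antisymm (mul_nonpos_of_nonpos_of_nonneg hdiscr.le (sq_nonneg _))
        (key ▸ sq_nonneg _)
    simpa [hdiscr.ne] using this
  have h0 : z 0 = 0 := by
    rw [h1] at key
    simpa [hM.c_ne_zero] using key
  exact hz (funext fun i => by fin_cases i <;> assumption)

end TwoByTwo

theorem abs_eval_S_sub_one_lt {t : ℤ} (ht : 2 ≤ |t|) (n : ℕ) :
    |(Chebyshev.S ℤ (n - 1)).eval t| < |(Chebyshev.S ℤ n).eval t| := by
  induction n with
  | zero => simp
  | succ n ih =>
    push_cast
    rw [add_sub_cancel_right, Chebyshev.S_add_one, eval_sub, eval_mul, eval_X]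
    set a := (Chebyshev.S ℤ (n - 1)).eval t
    set b := (Chebyshev.S ℤ n).eval t
    calc |b| < 2 * |b| - |a| := by linarith
      _ ≤ |t * b| - |a| := by rw [abs_mul]; gcongr
      _ ≤ |t * b - a| := abs_sub_abs_le_abs_sub _ _

theorem isElliptic_iff_trace_sq_le_one {M : Matrix (Fin 2) (Fin 2) ℤ} (hM : M.det = 1) :
    M.IsElliptic ↔ M.trace ^ 2 ≤ 1 := by
  rw [IsElliptic, discr_fin_two, hM]
  constructor <;> intro h
  · obtain ⟨h₁, h₂⟩ : -2 < M.trace ∧ M.trace < 2 := by constructor <;> nlinarith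
    interval_cases M.trace <;> norm_num
  · linarith

theorem eq_one_or_eq_neg_one_of_smul_eq_smul_one {A : SL2Z} {x s : ℤ}
    (hx : x ≠ 0) (h : x • (A : Matrix (Fin 2) (Fin 2) ℤ) = s • 1) :
    A = 1 ∨ A = -1 := by
  have hA := A.2
  rw [det_fin_two] at hA
  have entry : ∀ i j, x * A i j = if i = j then s else 0 := fun i j => by
    simpa [one_apply] using congr_fun₂ h i j
  have hb : A 0 1 = 0 := by simpa [hx] using entry 0 1
  have hc : A 1 0 = 0 := by simpa [hx] using entry 1 0
  have hd : A 1 1 = A 0 0 := mul_left_cancel₀ hx ((entry 1 1).trans (entry 0 0).symm)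
  rw [hb, hc, hd, mul_zero, sub_zero, mul_self_eq_one_iff] at hA
  refine hA.imp (fun ha => ?_) (fun ha => ?_) <;> ext i j <;> fin_cases i <;> fin_cases j <;>
    simp [ha, hb, hc, hd]

theorem isElliptic_of_pow_eq_one_or_eq_neg_one {A : SL2Z} (hA1 : A ≠ 1) (hA2 : A ≠ -1) {k : ℕ}
    (hk : 1 ≤ k) (hAk : A ^ k = 1 ∨ A ^ k = -1) :
    (A : Matrix (Fin 2) (Fin 2) ℤ).IsElliptic := by
  rw [isElliptic_iff_trace_sq_le_one A.2]
  by_contra! htr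
  set t := (A : Matrix (Fin 2) (Fin 2) ℤ).trace
  have ht : 2 ≤ |t| := by
    by_contra! h
    have h1 : |t| ≤ 1 := by omega
    nlinarith [abs_mul_abs_self t, abs_nonneg t]
  obtain ⟨n, rfl⟩ := Nat.exists_eq_add_of_le' hk
  obtain ⟨ε, hε⟩ : ∃ ε : ℤ, (A : Matrix (Fin 2) (Fin 2) ℤ) ^ (n + 1) = ε • 1 := by
    rcases hAk with h | h
    · exact ⟨1, by simpa using congrArg Subtype.val h⟩
    · exact ⟨-1, by simpa using congrArg Subtype.val h⟩
  have hS : (Chebyshev.S ℤ n).eval t ≠ 0 :=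
    abs_pos.mp ((abs_nonneg _).trans_lt (abs_eval_S_sub_one_lt ht n))
  refine (eq_one_or_eq_neg_one_of_smul_eq_smul_one hS
    (s := ε + (Chebyshev.S ℤ (n - 1)).eval t) ?_).elim hA1 hA2
  rw [add_smul, ← hε, pow_succ_eq_eval_S_smul_sub A.2]
  abel

theorem eq_of_abs_sq_add_mul_mul_add_sq_eq_one {t m n : ℤ} (ht : t ^ 2 ≤ 1)
    (h : |m ^ 2 + t * m * n + n ^ 2| = 1) :
    (m = 1 ∧ n = 0) ∨ (m = -1 ∧ n = 0) ∨ (m = 0 ∧ n = 1) ∨ (m = 0 ∧ n = -1) ∨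
      (m = -1 ∧ n = t) ∨ (m = 1 ∧ n = -t) := by
  obtain ⟨ht₁, ht₂⟩ : -1 ≤ t ∧ t ≤ 1 := by constructor <;> nlinarith
  rcases abs_eq (zero_le_one' ℤ) |>.mp h with h | h
  · obtain ⟨hn₁, hn₂⟩ : -1 ≤ n ∧ n ≤ 1 := by
      constructor <;> nlinarith [sq_nonneg (2 * m + t * n)]
    obtain ⟨hm₁, hm₂⟩ : -1 ≤ m ∧ m ≤ 1 := by
      constructor <;> nlinarith [sq_nonneg (2 * n + t * m)]
    interval_cases t <;> interval_cases m <;> interval_cases n <;> omega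
  · nlinarith [sq_nonneg (2 * m + t * n), sq_nonneg n]

theorem exists_pow_mulVec_eq_of_abs_wedge_eq_one {M : Matrix (Fin 2) (Fin 2) ℤ}
    (hdet : M.det = 1) (hM : M.IsElliptic) {u z : Fin 2 → ℤ} (hu : |wedge u (M *ᵥ u)| = 1)
    (hz : |wedge z (M *ᵥ z)| = 1) : ∃ j : ℕ, z = M ^ j *ᵥ u ∨ z = -(M ^ j *ᵥ u) := by
  obtain ⟨m, n, rfl⟩ :=
    exists_eq_smul_add_smul_of_isUnit_wedge (Int.isUnit_iff_abs_eq.mpr hu) z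
  rw [wedge_mulVec_smul_add_smul hdet, abs_mul, hu, mul_one] at hz
  have hsq : M ^ 2 *ᵥ u = M.trace • M *ᵥ u - u := by
    rw [sq_eq_trace_smul_sub_one hdet, sub_mulVec, smul_mulVec, one_mulVec]
  rcases eq_of_abs_sq_add_mul_mul_add_sq_eq_one ((isElliptic_iff_trace_sq_le_one hdet).mp hM) hz
    with ⟨rfl, rfl⟩ | ⟨rfl, rfl⟩ | ⟨rfl, rfl⟩ | ⟨rfl, rfl⟩ | ⟨rfl, rfl⟩ | ⟨rfl, rfl⟩
  · exact ⟨0, Or.inl (by simp)⟩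
  · exact ⟨0, Or.inr (by simp)⟩
  · exact ⟨1, Or.inl (by simp)⟩
  · exact ⟨1, Or.inr (by simp)⟩
  · exact ⟨2, Or.inl (by rw [hsq]; module)⟩
  · exact ⟨2, Or.inr (by rw [hsq]; module)⟩

def primitiveVec : OnePoint ℚ → Fin 2 → ℤ
  | OnePoint.infty => ![1, 0]
  | OnePoint.some x => ![x.num, x.den]

def ofIntVec (z : Fin 2 → ℤ) : OnePoint ℚ :=
  if z 1 = 0 then ∞ else ((z 0 / z 1 : ℚ) : OnePoint ℚ)

theorem isCoprime_primitiveVec (v : OnePoint ℚ) :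
    IsCoprime (primitiveVec v 0) (primitiveVec v 1) := by
  cases v with
  | infty => simpa [primitiveVec] using isCoprime_one_left
  | coe x => simpa [primitiveVec, Int.isCoprime_iff_nat_coprime] using x.reduced

theorem primitiveVec_ne_zero (v : OnePoint ℚ) : primitiveVec v ≠ 0 := fun h =>
  not_isCoprime_zero_zero (by simpa [h] using isCoprime_primitiveVec v)

theorem primitiveVec_div {p q : ℤ} (hq : 0 < q) (h : IsCoprime p q) :
    primitiveVec ((p / q : ℚ) : OnePoint ℚ) = ![p, q] := by
  rw [Int.isCoprime_iff_nat_coprime] at h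
  simp [primitiveVec, Rat.num_div_eq_of_coprime hq h, Rat.den_div_eq_of_coprime hq h]

theorem ofIntVec_primitiveVec (v : OnePoint ℚ) : ofIntVec (primitiveVec v) = v := by
  cases v with
  | infty => simp [primitiveVec, ofIntVec]
  | coe x => simp [primitiveVec, ofIntVec, Rat.num_div_den]

theorem ofIntVec_neg (z : Fin 2 → ℤ) : ofIntVec (-z) = ofIntVec z := by
  simp [ofIntVec, neg_div_neg_eq]

theorem primitiveVec_ofIntVec {z : Fin 2 → ℤ} (hz : IsCoprime (z 0) (z 1)) :
    primitiveVec (ofIntVec z) = z ∨ primitiveVec (ofIntVec z) = -z := by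
  have hz' : z = ![z 0, z 1] := by ext i; fin_cases i <;> rfl
  rcases lt_trichotomy (z 1) 0 with h | h | h
  · right
    have hneg : (z 0 / z 1 : ℚ) = ((-z 0 : ℤ) / (-z 1 : ℤ) : ℚ) := by
      push_cast; rw [neg_div_neg_eq]
    rw [ofIntVec, if_neg h.ne, hneg, primitiveVec_div (neg_pos.mpr h) hz.neg_neg, hz']
    simp
  · rw [h, isCoprime_zero_right, Int.isUnit_iff] at hz
    rw [ofIntVec, if_pos h, hz', h]
    rcases hz with h0 | h0 <;> simp [primitiveVec, h0]
  · left
    rw [ofIntVec, if_neg h.ne', primitiveVec_div h hz, ← hz']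

theorem mob_eq_ofIntVec (B : SL2Z) (v : OnePoint ℚ) :
    mob B v = ofIntVec (B *ᵥ primitiveVec v) := by
  cases v with
  | infty => simp [mob, ofIntVec, primitiveVec]
  | coe x =>
    have hden : (x.den : ℚ) ≠ 0 := by positivity
    have scale : ∀ r s : ℤ, (r : ℚ) * x + s = ((r * x.num + s * x.den : ℤ) : ℚ) / x.den := by
      intro r s
      rw [eq_div_iff hden, add_mul, mul_assoc, Rat.mul_den_eq_num]
      push_cast; ring
    simp only [mob, ofIntVec, primitiveVec, mulVec_fin_two, scale, div_eq_zero_iff, hden,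
      or_false, Int.cast_eq_zero, div_div_div_cancel_right₀ hden, cons_val_zero, cons_val_one]

theorem primitiveVec_mob (B : SL2Z) (v : OnePoint ℚ) :
    primitiveVec (mob B v) = B *ᵥ primitiveVec v ∨
      primitiveVec (mob B v) = -(B *ᵥ primitiveVec v) := by
  rw [mob_eq_ofIntVec]
  exact primitiveVec_ofIntVec (isCoprime_mulVec B.2 (isCoprime_primitiveVec v))

theorem mob_eq_of_primitiveVec_eq {B : SL2Z} {v w : OnePoint ℚ}
    (h : primitiveVec v = B *ᵥ primitiveVec w ∨ primitiveVec v = -(B *ᵥ primitiveVec w)) :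
    mob B w = v := by
  rw [mob_eq_ofIntVec, ← ofIntVec_primitiveVec v]
  rcases h with h | h <;> rw [h]
  rw [ofIntVec_neg]

theorem fareyAdj_iff_abs_wedge_primitiveVec (u w : OnePoint ℚ) :
    fareyAdj u w ↔ |wedge (primitiveVec u) (primitiveVec w)| = 1 := by
  cases u <;> cases w <;> simp [fareyAdj, primitiveVec, wedge]

theorem abs_wedge_primitiveVec_mulVec_eq_one {A : SL2Z}
    (hA : (A : Matrix (Fin 2) (Fin 2) ℤ).IsElliptic) {v : OnePoint ℚ}
    (hv : mob A v = v ∨ fareyAdj (mob A v) v) :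
    |wedge (primitiveVec v) (A *ᵥ primitiveVec v)| = 1 := by
  rcases hv with hfix | hadj
  · refine absurd ?_ (hA.wedge_mulVec_ne_zero (primitiveVec_ne_zero v))
    rcases primitiveVec_mob A v with h | h <;> rw [hfix] at h
    · rw [← h, wedge_self]
    · rw [neg_eq_iff_eq_neg.mp h.symm, wedge_neg_right, wedge_self, neg_zero]
  · rw [fareyAdj_iff_abs_wedge_primitiveVec] at hadj
    rcases primitiveVec_mob A v with h | h <;> rw [h] at hadj
    · rwa [wedge_comm, abs_neg] at hadj
    · rwa [wedge_neg_left, abs_neg, wedge_comm, abs_neg] at hadj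

theorem periodic_single_class (A : SL2Z) (hA1 : A ≠ 1) (hA2 : A ≠ -1)
    (hfin : ∃ k : ℕ, 1 ≤ k ∧ (A ^ k = 1 ∨ A ^ k = -1)) :
    ∃ v₀ : OnePoint ℚ, ∀ v : OnePoint ℚ,
      (mob A v = v ∨ fareyAdj (mob A v) v) →
      ∃ n : ℤ, mob (A ^ n) v₀ = v := by
  obtain ⟨k, hk, hAk⟩ := hfin
  have hA := isElliptic_of_pow_eq_one_or_eq_neg_one hA1 hA2 hk hAk
  by_cases hS : ∃ v₀, mob A v₀ = v₀ ∨ fareyAdj (mob A v₀) v₀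
  · obtain ⟨v₀, hv₀⟩ := hS
    refine ⟨v₀, fun v hv => ?_⟩
    obtain ⟨j, hj⟩ := exists_pow_mulVec_eq_of_abs_wedge_eq_one A.2 hA
      (abs_wedge_primitiveVec_mulVec_eq_one hA hv₀) (abs_wedge_primitiveVec_mulVec_eq_one hA hv)
    refine ⟨j, mob_eq_of_primitiveVec_eq ?_⟩
    simpa using hj
  · exact ⟨∞, fun v hv => absurd ⟨v, hv⟩ hS⟩
end

section
/- Let ε ∈ {1, −1}, let n be a nonzero integer, and let A = [[ε, n],[0, ε]] ∈ SL(2,ℤ). Then a point v ∈ ℚ ∪ {∞} satisfies (A·v = v or A·v is Farey-adjacent to v) if and only if v = ∞, or |n| = 1 and v is an integer. Moreover, when |n| = 1 the integers form a single A-equivalence class (the orbit of 0), so the set of such v is contained in the union of at most two A-equivalence classes, namely that of ∞ and (when |n| = 1) that of 0. -/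
open OnePoint Matrix

/-!
An element `B` of `SL(2,ℤ)` with `B 1 0 = 0` is `±[[1, t], [0, 1]]`: it fixes `∞` and
translates `ℚ` by `t`, and these translation lengths add under multiplication. For
`A = [[ε, n], [0, ε]]` we get `t = nε ≠ 0`, so `A` fixes only `∞`. Since `x + t` has numerator
`x.num + t·x.den` and denominator `x.den`, the Farey determinant of `x + t` and `x` is
`t·x.den²`, which is `±1` exactly when `|n| = 1` and `x ∈ ℤ`. When `t = ±1`, the power
`A ^ (m t)` translates by `m t² = m`, sending `0` to `m`.
-/

open Matrix.SpecialLinearGroup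

namespace SL2Z

/-- When `B 1 0 = 0`, `B = ±[[1, t], [0, 1]]` with `t = translation B`, and `mob B` is
`x ↦ x + t`. -/
def translation (B : SL2Z) : ℤ := B 0 1 * B 1 1

variable {B C : SL2Z}

lemma zero_zero_mul_one_one (h : B 1 0 = 0) : B 0 0 * B 1 1 = 1 := by
  have hdet := B.det_coe
  rw [det_fin_two, h, mul_zero, sub_zero] at hdet
  exact hdet

lemma zero_zero_eq_one_one (h : B 1 0 = 0) : B 0 0 = B 1 1 := by
  rcases Int.eq_one_or_neg_one_of_mul_eq_one' (zero_zero_mul_one_one h) with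
    ⟨h0, h1⟩ | ⟨h0, h1⟩ <;> rw [h0, h1]

lemma one_one_mul_self (h : B 1 0 = 0) : B 1 1 * B 1 1 = 1 := by
  simpa [zero_zero_eq_one_one h] using zero_zero_mul_one_one h

lemma mul_one_zero (hB : B 1 0 = 0) (hC : C 1 0 = 0) : (B * C) 1 0 = 0 := by
  simp [coe_mul, mul_apply, Fin.sum_univ_two, hB, hC]

lemma translation_mul (hB : B 1 0 = 0) (hC : C 1 0 = 0) :
    translation (B * C) = translation B + translation C := by
  simp only [translation, coe_mul, mul_apply, Fin.sum_univ_two, hB]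
  linear_combination
    (C 0 1 * C 1 1) * zero_zero_mul_one_one hB + (B 0 1 * B 1 1) * one_one_mul_self hC

lemma inv_one_zero (h : B 1 0 = 0) : B⁻¹ 1 0 = 0 := by
  simp [coe_inv, adjugate_fin_two, h]

lemma translation_inv (h : B 1 0 = 0) : translation B⁻¹ = -translation B := by
  simp [translation, coe_inv, adjugate_fin_two, zero_zero_eq_one_one h]

lemma zpow_one_zero_and_translation (h : B 1 0 = 0) (k : ℤ) :
    (B ^ k) 1 0 = 0 ∧ translation (B ^ k) = k * translation B := by
  induction k using Int.induction_on with
  | zero => simp [translation]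
  | succ k ih =>
    rw [_root_.zpow_add_one]
    exact ⟨mul_one_zero ih.1 h, by rw [translation_mul ih.1 h, ih.2]; ring⟩
  | pred k ih =>
    rw [_root_.zpow_sub_one]
    refine ⟨mul_one_zero ih.1 (inv_one_zero h), ?_⟩
    rw [translation_mul ih.1 (inv_one_zero h), ih.2, translation_inv h]; ring

lemma mob_infty_of_one_zero (h : B 1 0 = 0) : mob B ∞ = ∞ := by
  simp [mob, h]

lemma mob_coe_of_one_zero (h : B 1 0 = 0) (x : ℚ) :
    mob B x = ((x + translation B : ℚ) : OnePoint ℚ) := by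
  have hd : (B 1 1 : ℚ) * B 1 1 = 1 := mod_cast one_one_mul_self h
  have hd0 : (B 1 1 : ℚ) ≠ 0 := left_ne_zero_of_mul_eq_one hd
  have hmob : mob B x = (((B 0 0 * x + B 0 1) / B 1 1 : ℚ) : OnePoint ℚ) := by
    simp [mob, h, hd0]
  rw [hmob, translation, zero_zero_eq_one_one h]
  congr 1
  rw [div_eq_iff hd0]
  push_cast
  linear_combination (-(B 0 1 : ℚ)) * hd

lemma abs_translation (h : B 1 0 = 0) : |translation B| = |B 0 1| := by
  have h11 : |B 1 1| = 1 := by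
    rcases Int.eq_one_or_neg_one_of_mul_eq_one (one_one_mul_self h) with h1 | h1 <;> simp [h1]
  rw [translation, abs_mul, h11, mul_one]

end SL2Z

open SL2Z

lemma Rat.num_add_intCast (x : ℚ) (c : ℤ) : (x + c).num = x.num + c * x.den := by
  have h := Rat.mul_den_eq_num (x + c)
  rw [Rat.add_intCast_den, add_mul, Rat.mul_den_eq_num] at h
  exact_mod_cast h.symm

lemma fareyAdj_add_intCast_iff (x : ℚ) (c : ℤ) :
    fareyAdj ((x + c : ℚ) : OnePoint ℚ) x ↔ |c| = 1 ∧ x.den = 1 := by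
  change |(x + c).num * x.den - (x + c).den * x.num| = 1 ↔ _
  rw [Rat.add_intCast_den, Rat.num_add_intCast,
    show (x.num + c * x.den) * x.den - x.den * x.num = c * (x.den * x.den : ℕ) by push_cast; ring,
    Int.abs_eq_natAbs, Int.abs_eq_natAbs, Int.natAbs_mul, Int.natAbs_natCast]
  norm_cast
  rw [mul_eq_one, mul_eq_one, and_self]

theorem reducible_case_computation_general (ε n : ℤ) (hn : n ≠ 0)
    (A : SL2Z) (hA : (A : Matrix (Fin 2) (Fin 2) ℤ) = !![ε, n; 0, ε]) :
    (∀ v : OnePoint ℚ,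
      (mob A v = v ∨ fareyAdj (mob A v) v) ↔
        (v = ∞ ∨ (|n| = 1 ∧ ∃ m : ℤ, v = ((m : ℚ) : OnePoint ℚ)))) ∧
    (|n| = 1 → ∀ m : ℤ, ∃ k : ℤ,
      mob (A ^ k) (((0 : ℚ) : OnePoint ℚ)) = ((m : ℚ) : OnePoint ℚ)) := by
  have hA10 : A 1 0 = 0 := by simp [hA]
  have habs : |translation A| = |n| := by simpa [hA] using abs_translation hA10
  refine ⟨fun v => ?_, fun hn1 m => ⟨m * translation A, ?_⟩⟩
  · induction v using OnePoint.rec with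
    | infty => simp [mob_infty_of_one_zero hA10]
    | coe x =>
      have ht : translation A ≠ 0 := by rw [← abs_ne_zero, habs]; exact abs_ne_zero.2 hn
      have hx_int : (∃ m : ℤ, x = m) ↔ x.den = 1 :=
        ⟨fun ⟨m, hm⟩ => hm ▸ Rat.den_intCast m,
          fun h => ⟨x.num, ((Rat.den_eq_one_iff x).1 h).symm⟩⟩
      simp [mob_coe_of_one_zero hA10, fareyAdj_add_intCast_iff, habs, ht, hx_int]
  · obtain ⟨hpow10, hpowt⟩ := zpow_one_zero_and_translation hA10 (m * translation A)
    have htt : translation A * translation A = 1 := by rw [← abs_mul_abs_self, habs, hn1, mul_one]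
    rw [mob_coe_of_one_zero hpow10, hpowt, mul_assoc, htt]
    simp

theorem reducible_case_computation (ε n : ℤ) (hε : ε = 1 ∨ ε = -1) (hn : n ≠ 0)
    (A : SL2Z) (hA : (A : Matrix (Fin 2) (Fin 2) ℤ) = !![ε, n; 0, ε]) :
    (∀ v : OnePoint ℚ,
      (mob A v = v ∨ fareyAdj (mob A v) v) ↔
        (v = ∞ ∨ (|n| = 1 ∧ ∃ m : ℤ, v = ((m : ℚ) : OnePoint ℚ)))) ∧
    (|n| = 1 → ∀ m : ℤ, ∃ k : ℤ,
      mob (A ^ k) (((0 : ℚ) : OnePoint ℚ)) = ((m : ℚ) : OnePoint ℚ)) :=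
  reducible_case_computation_general ε n hn A hA
end

section
/- Let A = [[a,b],[c,d]] ∈ SL(2,ℤ) be hyperbolic (|a+d| > 2), with real fixed points α₋ < α₊. If v ∈ ℚ ∪ {∞} is such that v and A·v are Farey-adjacent, then v is visible from the axis: there exists w ∈ ℚ ∪ {∞}, on the opposite side of the axis from v, such that v and w are Farey-adjacent. -/
open OnePoint Matrix

/-- A point of `ℚ ∪ {∞}` lies (strictly) inside the axis with endpoints
`αm < αp` if, as a real number, it lies strictly between them; `∞` counts
as outside. -/
def insideAxis (αm αp : ℝ) : OnePoint ℚ → Prop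
  | OnePoint.infty => False
  | OnePoint.some x => αm < (x : ℝ) ∧ (x : ℝ) < αp


/-!
Write points of `ℚ ∪ {∞}` in reduced homogeneous coordinates `u = (p, q)`. The cross product of
`u` with `A • u` is the binary quadratic form `Q(p, q) = c p² + (d - a) p q - b q²`, whose
discriminant is `(a + d)² - 4 ≥ 5` and which factors over `ℝ` as `c (p - α₋ q) (p - α₊ q)`; hence
two points lie on opposite sides of the axis as soon as `Q` takes values of opposite signs on
them. If `v` is adjacent to `A • v`, then `Q(u) = ±1`. The Farey neighbours of `v` include
`w + t u` (`t ∈ ℤ`) for a fixed neighbour `w`, and `t ↦ Q(u) Q(w + t u)` is a monic integer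
quadratic of discriminant `(a + d)² - 4 > 1`, so it is negative at the integer nearest to its
vertex.
-/

def homCoords : OnePoint ℚ → ℤ × ℤ
  | ∞ => (1, 0)
  | (x : ℚ) => (x.num, x.den)

def ofHom (u : ℤ × ℤ) : OnePoint ℚ :=
  if u.2 = 0 then ∞ else ((u.1 / u.2 : ℚ) : OnePoint ℚ)

def cross (u w : ℤ × ℤ) : ℤ := u.1 * w.2 - u.2 * w.1

lemma ofHom_homCoords (v : OnePoint ℚ) : ofHom (homCoords v) = v := by
  cases v with
  | infty => rfl
  | coe x => simp [homCoords, ofHom, x.den_nz, Rat.num_div_den]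

lemma isCoprime_homCoords (v : OnePoint ℚ) : IsCoprime (homCoords v).1 (homCoords v).2 := by
  cases v with
  | infty => exact isCoprime_one_left
  | coe x => exact Int.isCoprime_iff_gcd_eq_one.mpr x.reduced

lemma fareyAdj_iff_abs_cross (v w : OnePoint ℚ) :
    fareyAdj v w ↔ |cross (homCoords v) (homCoords w)| = 1 := by
  cases v <;> cases w <;> simp [fareyAdj, homCoords, cross]

lemma cross_smul_smul (k l : ℤ) (u w : ℤ × ℤ) : cross (k • u) (l • w) = k * l * cross u w := by
  simp only [cross, Prod.smul_fst, Prod.smul_snd, smul_eq_mul]; ring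

lemma cross_add_smul (u w : ℤ × ℤ) (t : ℤ) : cross u (w + t • u) = cross u w := by
  simp only [cross, Prod.fst_add, Prod.snd_add, Prod.smul_fst, Prod.smul_snd, smul_eq_mul]; ring

lemma isCoprime_of_abs_cross_eq_one {u w : ℤ × ℤ} (h : |cross u w| = 1) : IsCoprime w.1 w.2 := by
  rcases abs_eq (zero_le_one' ℤ) |>.mp h with h | h
  · exact ⟨-u.2, u.1, by rw [cross] at h; linarith⟩
  · exact ⟨u.2, -u.1, by rw [cross] at h; linarith⟩

lemma exists_cross_eq_one_of_isCoprime {u : ℤ × ℤ} (hu : IsCoprime u.1 u.2) :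
    ∃ w : ℤ × ℤ, cross u w = 1 := by
  obtain ⟨x, y, hxy⟩ := hu
  exact ⟨(-y, x), by simp only [cross]; linear_combination hxy⟩

lemma exists_isUnit_smul_homCoords_ofHom {u : ℤ × ℤ} (hu : IsCoprime u.1 u.2) :
    ∃ k : ℤ, IsUnit k ∧ u = k • homCoords (ofHom u) := by
  by_cases h2 : u.2 = 0
  · refine ⟨u.1, isCoprime_zero_right.mp (h2 ▸ hu), ?_⟩
    simp [ofHom, h2, homCoords, Prod.ext_iff]
  · obtain ⟨k, h1, hk2⟩ := Rat.exists_eq_mul_div_num_and_eq_mul_div_den u.1 h2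
    refine ⟨k, hu.isUnit_of_dvd' (h1 ▸ dvd_mul_right _ _) (hk2 ▸ dvd_mul_right _ _), ?_⟩
    simp only [ofHom, h2, if_false, homCoords]
    exact Prod.ext h1 hk2

lemma fareyAdj_ofHom_iff {u w : ℤ × ℤ} (hu : IsCoprime u.1 u.2) (hw : IsCoprime w.1 w.2) :
    fareyAdj (ofHom u) (ofHom w) ↔ |cross u w| = 1 := by
  obtain ⟨k, hk, hku⟩ := exists_isUnit_smul_homCoords_ofHom hu
  obtain ⟨l, hl, hlw⟩ := exists_isUnit_smul_homCoords_ofHom hw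
  rw [fareyAdj_iff_abs_cross, hku, hlw, cross_smul_smul, abs_mul, abs_mul,
    Int.isUnit_iff_abs_eq.mp hk, Int.isUnit_iff_abs_eq.mp hl, one_mul, one_mul, ← hku, ← hlw]

lemma ofHom_eq_of_cast_eq_mul {u : ℤ × ℤ} {x y s : ℚ} (hs : s ≠ 0) (h1 : (u.1 : ℚ) = x * s)
    (h2 : (u.2 : ℚ) = y * s) : ofHom u = if y = 0 then ∞ else ((x / y : ℚ) : OnePoint ℚ) := by
  have hy : u.2 = 0 ↔ y = 0 := by
    rw [← Int.cast_eq_zero (α := ℚ), h2, mul_eq_zero, or_iff_left hs]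
  simp only [ofHom, hy]
  split_ifs
  · rfl
  · rw [h1, h2, mul_div_mul_right _ _ hs]

def linAct (A : SL2Z) (u : ℤ × ℤ) : ℤ × ℤ :=
  (A.1 0 0 * u.1 + A.1 0 1 * u.2, A.1 1 0 * u.1 + A.1 1 1 * u.2)

lemma mob_ofHom (A : SL2Z) {u : ℤ × ℤ} (hu : u ≠ 0) : mob A (ofHom u) = ofHom (linAct A u) := by
  by_cases h2 : u.2 = 0
  · have h1 : (u.1 : ℚ) ≠ 0 := by exact_mod_cast fun h1 => hu (Prod.ext h1 h2)
    rw [show ofHom u = ∞ from if_pos h2,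
      ofHom_eq_of_cast_eq_mul h1 (x := A.1 0 0) (y := A.1 1 0)
        (by simp only [linAct, h2]; push_cast; ring) (by simp only [linAct, h2]; push_cast; ring)]
    rfl
  · have hq : (u.2 : ℚ) ≠ 0 := by exact_mod_cast h2
    rw [show ofHom u = ((u.1 / u.2 : ℚ) : OnePoint ℚ) from if_neg h2,
      ofHom_eq_of_cast_eq_mul hq (x := A.1 0 0 * (u.1 / u.2) + A.1 0 1)
        (y := A.1 1 0 * (u.1 / u.2) + A.1 1 1) (by simp only [linAct]; push_cast; field_simp)
        (by simp only [linAct]; push_cast; field_simp)]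
    rfl

lemma isCoprime_linAct (A : SL2Z) {u : ℤ × ℤ} (hu : IsCoprime u.1 u.2) :
    IsCoprime (linAct A u).1 (linAct A u).2 := by
  obtain ⟨x, y, hxy⟩ := hu
  have hdet : A.1 0 0 * A.1 1 1 - A.1 0 1 * A.1 1 0 = 1 := by
    rw [← det_fin_two]; exact A.2
  exact ⟨x * A.1 1 1 - y * A.1 1 0, y * A.1 0 0 - x * A.1 0 1, by
    simp only [linAct]; linear_combination (x * u.1 + y * u.2) * hdet + hxy⟩

def binForm (k l m : ℤ) (u : ℤ × ℤ) : ℤ := k * u.1 ^ 2 + l * u.1 * u.2 + m * u.2 ^ 2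

def binPolar (k l m : ℤ) (u w : ℤ × ℤ) : ℤ :=
  2 * k * u.1 * w.1 + l * (u.1 * w.2 + u.2 * w.1) + 2 * m * u.2 * w.2

lemma cross_linAct (A : SL2Z) (u : ℤ × ℤ) :
    cross u (linAct A u) = binForm (A.1 1 0) (A.1 1 1 - A.1 0 0) (-A.1 0 1) u := by
  simp only [cross, linAct, binForm]; ring

section BinaryForm

variable {k l m : ℤ}

lemma binForm_add_smul (u w : ℤ × ℤ) (t : ℤ) :
    binForm k l m (w + t • u)
      = binForm k l m u * t ^ 2 + binPolar k l m u w * t + binForm k l m w := by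
  simp only [binForm, binPolar, Prod.fst_add, Prod.snd_add, Prod.smul_fst, Prod.smul_snd,
    smul_eq_mul]
  ring

lemma binPolar_sq_sub (u w : ℤ × ℤ) :
    binPolar k l m u w ^ 2 - 4 * binForm k l m u * binForm k l m w
      = (l ^ 2 - 4 * k * m) * cross u w ^ 2 := by
  simp only [binForm, binPolar, cross]; ring

lemma exists_sq_add_mul_add_neg {β γ : ℤ} (h : 1 < β ^ 2 - 4 * γ) :
    ∃ t : ℤ, t ^ 2 + β * t + γ < 0 := by
  obtain ⟨t, ht⟩ : ∃ t : ℤ, 2 * t + β = 0 ∨ 2 * t + β = 1 := ⟨-(β / 2), by omega⟩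
  refine ⟨t, ?_⟩
  have key : 4 * (t ^ 2 + β * t + γ) = (2 * t + β) ^ 2 - (β ^ 2 - 4 * γ) := by ring
  rcases ht with h0 | h0 <;> rw [h0] at key <;> linarith

lemma exists_binForm_mul_binForm_add_smul_neg (hΔ : 1 < l ^ 2 - 4 * k * m) {u w : ℤ × ℤ}
    (hu : |binForm k l m u| = 1) (huw : |cross u w| = 1) :
    ∃ t : ℤ, binForm k l m u * binForm k l m (w + t • u) < 0 := by
  set ε := binForm k l m u
  have hε : ε ^ 2 = 1 := by rw [← sq_abs, hu, one_pow]
  have hcross : cross u w ^ 2 = 1 := by rw [← sq_abs, huw, one_pow]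
  obtain ⟨t, ht⟩ := exists_sq_add_mul_add_neg (β := ε * binPolar k l m u w)
    (γ := ε * binForm k l m w) (by
      have hdisc := binPolar_sq_sub (k := k) (l := l) (m := m) u w
      rw [hcross, mul_one] at hdisc
      have h : (ε * binPolar k l m u w) ^ 2 - 4 * (ε * binForm k l m w) = l ^ 2 - 4 * k * m := by
        linear_combination binPolar k l m u w ^ 2 * hε + hdisc
      exact h ▸ hΔ)
  refine ⟨t, ?_⟩
  rw [binForm_add_smul]
  linear_combination ht + t ^ 2 * hε

end BinaryForm

section Axis

variable {αm αp : ℝ}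

lemma insideAxis_ofHom_iff (hlt : αm < αp) (u : ℤ × ℤ) :
    insideAxis αm αp (ofHom u) ↔ (u.1 - αm * u.2) * (u.1 - αp * u.2) < 0 := by
  by_cases h2 : u.2 = 0
  · simp only [ofHom, h2, if_true, insideAxis, Int.cast_zero, mul_zero, sub_zero, false_iff]
    exact not_lt.mpr (mul_self_nonneg _)
  · set x : ℝ := ((u.1 / u.2 : ℚ) : ℝ)
    have hq : (0 : ℝ) < (u.2 : ℝ) ^ 2 := by positivity
    have hfactor :
        (u.1 - αm * u.2) * (u.1 - αp * u.2) = (u.2 : ℝ) ^ 2 * ((x - αm) * (x - αp)) := by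
      simp only [x]; push_cast; field_simp
    simp only [ofHom, h2, if_false, insideAxis]
    rw [hfactor, ← smul_eq_mul, smul_neg_iff_of_pos_left hq, mul_neg_iff]
    constructor
    · rintro ⟨h1, h2⟩
      exact Or.inl ⟨by linarith, by linarith⟩
    · rintro (⟨h1, h2⟩ | ⟨h1, h2⟩) <;> constructor <;> linarith

variable {k l m : ℤ}

lemma binForm_eq_mul_of_roots (hne : αm ≠ αp)
    (hm : k * αm ^ 2 + l * αm + m = 0) (hp : k * αp ^ 2 + l * αp + m = 0) (u : ℤ × ℤ) :
    (binForm k l m u : ℝ) = k * ((u.1 - αm * u.2) * (u.1 - αp * u.2)) := by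
  have hsum : (k : ℝ) * (αm + αp) + l = 0 := by
    have h : (αm - αp) * (k * (αm + αp) + l) = 0 := by linear_combination hm - hp
    exact (mul_eq_zero.mp h).resolve_left (sub_ne_zero.mpr hne)
  have hprod : (k : ℝ) * (αm * αp) - m = 0 := by linear_combination αm * hsum - hm
  simp only [binForm]; push_cast
  linear_combination ((u.1 : ℝ) * u.2) * hsum - (u.2 : ℝ) ^ 2 * hprod

lemma not_insideAxis_iff_of_binForm_mul_neg (hlt : αm < αp)
    (hm : k * αm ^ 2 + l * αm + m = 0) (hp : k * αp ^ 2 + l * αp + m = 0) {u w : ℤ × ℤ}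
    (h : binForm k l m u * binForm k l m w < 0) :
    ¬(insideAxis αm αp (ofHom u) ↔ insideAxis αm αp (ofHom w)) := by
  rw [insideAxis_ofHom_iff hlt, insideAxis_ofHom_iff hlt]
  have hR : (binForm k l m u : ℝ) * binForm k l m w < 0 := by exact_mod_cast h
  rw [binForm_eq_mul_of_roots hlt.ne hm hp, binForm_eq_mul_of_roots hlt.ne hm hp] at hR
  set f := ((u.1 : ℝ) - αm * u.2) * (u.1 - αp * u.2)
  set g := ((w.1 : ℝ) - αm * w.2) * (w.1 - αp * w.2)
  have hfg : f * g < 0 := by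
    by_contra! hfg
    nlinarith [mul_nonneg (sq_nonneg (k : ℝ)) hfg]
  intro hiff
  rcases mul_neg_iff.mp hfg with ⟨hf, hg⟩ | ⟨hf, hg⟩
  · exact hf.not_gt (hiff.mpr hg)
  · exact hg.not_gt (hiff.mp hf)

end Axis

theorem visible_from_axis (A : SL2Z) (hyp : |A.1 0 0 + A.1 1 1| > 2)
    (αm αp : ℝ) (hlt : αm < αp)
    (hm : (A.1 1 0 : ℝ) * αm ^ 2 + ((A.1 1 1 : ℝ) - (A.1 0 0 : ℝ)) * αm - (A.1 0 1 : ℝ) = 0)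
    (hp : (A.1 1 0 : ℝ) * αp ^ 2 + ((A.1 1 1 : ℝ) - (A.1 0 0 : ℝ)) * αp - (A.1 0 1 : ℝ) = 0)
    (v : OnePoint ℚ) (hv : fareyAdj v (mob A v)) :
    ∃ w : OnePoint ℚ, fareyAdj v w ∧
      ¬ (insideAxis αm αp v ↔ insideAxis αm αp w) := by
  set u := homCoords v
  have hu : IsCoprime u.1 u.2 := isCoprime_homCoords v
  have hdisc : 1 < (A.1 1 1 - A.1 0 0) ^ 2 - 4 * A.1 1 0 * -A.1 0 1 := by
    have hdet : A.1 0 0 * A.1 1 1 - A.1 0 1 * A.1 1 0 = 1 := by rw [← det_fin_two]; exact A.2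
    have htr : 3 ≤ |A.1 0 0 + A.1 1 1| := hyp
    nlinarith [sq_abs (A.1 0 0 + A.1 1 1 : ℤ)]
  have hQu : |binForm (A.1 1 0) (A.1 1 1 - A.1 0 0) (-A.1 0 1) u| = 1 := by
    have hu0 : u ≠ 0 := fun h => not_isCoprime_zero_zero (h ▸ hu)
    rwa [← ofHom_homCoords v, mob_ofHom A hu0, fareyAdj_ofHom_iff hu (isCoprime_linAct A hu),
      cross_linAct] at hv
  obtain ⟨w, hw⟩ := exists_cross_eq_one_of_isCoprime hu
  have hadj : ∀ t : ℤ, |cross u (w + t • u)| = 1 := fun t => by rw [cross_add_smul, hw, abs_one]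
  obtain ⟨t, ht⟩ := exists_binForm_mul_binForm_add_smul_neg hdisc hQu (by rw [hw, abs_one])
  refine ⟨ofHom (w + t • u), ?_, ?_⟩
  · rw [← ofHom_homCoords v]
    exact (fareyAdj_ofHom_iff hu (isCoprime_of_abs_cross_eq_one (hadj t))).mpr (hadj t)
  · rw [← ofHom_homCoords v]
    exact not_insideAxis_iff_of_binForm_mul_neg hlt (by push_cast; linear_combination hm)
      (by push_cast; linear_combination hp) ht
end
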